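/- Let G be a group, n ≥ 3, E the set of idempotents of End F_n(G), and IG(E) the free idempotent generated monoid over E. Let a, b : {1,…,n} → G with a(1) = b(1) = 1 and let j ∈ {1,…,n}. If a(j) = b(j) (equivalently, e_{1j} e_{a,1} = e_{1j} e_{b,1} in End F_n(G)), then ē_{11} ē_{a,j} ē_{11} = ē_{11} ē_{b,j} ē_{11} in IG(E). -/

import Mathlib

/-- An endomorphism of the rank-`n` free left `G`-act `F_n(G) = G × Fin n`
(the formal symbols `g x_i` are the pairs `(g, i)`), where the action is
`h • (g, i) = (h * g, i)` and equivariance says `(h • x) a = h • (x a)`. -/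
structure ActEnd (G : Type*) [Group G] (n : ℕ) : Type _ where
  toFun : G × Fin n → G × Fin n
  equivariant : ∀ (h : G) (x : G × Fin n),
    toFun (h * x.1, x.2) = (h * (toFun x).1, (toFun x).2)

namespace ActEnd

variable {G : Type*} [Group G] {n : ℕ}

/-- Composition is written left-to-right: `x (a * b) = (x a) b`. -/
instance : Monoid (ActEnd G n) where
  mul a b := ⟨fun x => b.toFun (a.toFun x), by
    intro h x
    try dsimp only
    rw [a.equivariant h x, b.equivariant]⟩
  one := ⟨id, fun _ _ => rfl⟩
  mul_assoc _ _ _ := rfl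
  one_mul _ := rfl
  mul_one _ := rfl

@[simp] theorem mul_toFun (a b : ActEnd G n) (x : G × Fin n) :
    (a * b).toFun x = b.toFun (a.toFun x) := rfl

theorem ext' {a b : ActEnd G n} (h : a.toFun = b.toFun) : a = b := by
  cases a; cases b; cases h; rfl

/-- The rank of an endomorphism of `F_n(G)`: the number of indices `j` such
that `G x_j` meets the image. -/
noncomputable def rank (a : ActEnd G n) : ℕ :=
  Nat.card {j : Fin n // ∃ x, (a.toFun x).2 = j}

end ActEnd

namespace ActEnd

variable {G : Type*} [Group G] {n : ℕ}

/-- The rank-1 idempotent `e_{a,j}` given by `(g x_t) e_{a,j} = (g * a t * (a j)⁻¹) x_j`.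
Taking `a` constantly `1` gives `e_{1j}`, and also `j = 0` gives `e_{11}`
(indices `1, …, n` are realised as `Fin n`, with `1 ↦ 0`). -/
def eaj (a : Fin n → G) (j : Fin n) : ActEnd G n :=
  ⟨fun x => (x.1 * a x.2 * (a j)⁻¹, j), by intro h x; simp [mul_assoc]⟩

theorem eaj_idem (a : Fin n → G) (j : Fin n) : eaj a j * eaj a j = eaj a j := by
  apply ext'
  funext x
  simp [eaj, mul_assoc]

/-- The map `a_g : g' x_t ↦ (g' * g) x_1`. -/
def aMap (g : G) (h0 : 0 < n) : ActEnd G n :=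
  ⟨fun x => (x.1 * g, ⟨0, h0⟩), by intro h x; simp [mul_assoc]⟩

end ActEnd

/-- The principal left ideal `M a` of `a`. -/
def lIdeal {M : Type*} [Monoid M] (a : M) : Set M := Set.range fun m => m * a

/-- The principal right ideal `a M` of `a`. -/
def rIdeal {M : Type*} [Monoid M] (a : M) : Set M := Set.range fun m => a * m

/-- The `H`-class of `e`: all elements that are both `L`- and `R`-related to `e`. -/
def hClass {M : Type*} [Monoid M] (e : M) : Set M :=
  {a | lIdeal a = lIdeal e ∧ rIdeal a = rIdeal e}

/-- The defining relation of the free idempotent generated monoid `IG(E)`: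
`ē f̄ = (e f)‾` whenever `{e, f} ∩ {e f, f e} ≠ ∅`. -/
def igRel (M : Type*) [Monoid M] :
    FreeMonoid {e : M // e * e = e} → FreeMonoid {e : M // e * e = e} → Prop :=
  fun x y => ∃ e f g : {e : M // e * e = e},
    (e.1 * f.1 = e.1 ∨ e.1 * f.1 = f.1 ∨ f.1 * e.1 = e.1 ∨ f.1 * e.1 = f.1) ∧
    e.1 * f.1 = g.1 ∧
    x = FreeMonoid.of e * FreeMonoid.of f ∧ y = FreeMonoid.of g

/-- The free idempotent generated monoid over the biordered set of idempotents
of `M`: the presented monoid with generators `ē` for each idempotent `e` and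
relations `ē f̄ = (e f)‾` whenever `{e, f} ∩ {e f, f e} ≠ ∅`. -/
abbrev IG (M : Type*) [Monoid M] : Type _ := (conGen (igRel M)).Quotient

/-- The generator `ē` of `IG(E)` corresponding to the idempotent `e`. -/
def ebar {M : Type*} [Monoid M] (e : {e : M // e * e = e}) : IG M :=
  (conGen (igRel M)).mk' (FreeMonoid.of e)

/-- `ē_{a,j}` as an element of `IG(E)` for `E` the idempotents of `End F_n(G)`. -/
def igE {G : Type*} [Group G] {n : ℕ} (a : Fin n → G) (j : Fin n) : IG (ActEnd G n) :=
  ebar ⟨ActEnd.eaj a j, ActEnd.eaj_idem a j⟩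

/-- `ē_{11}` as an element of `IG(E)`. -/
def ig11 {G : Type*} [Group G] {n : ℕ} (h0 : 0 < n) : IG (ActEnd G n) :=
  igE (fun _ => (1 : G)) ⟨0, h0⟩

/-!
In `IG(E)` one may insert an idempotent `f̄` wherever a basic pair lets it be absorbed. For
`a`, `b` agreeing at `1` and at `j` there is an idempotent `f`, sending `x_j` into
`G x_j` and every other `x_t` into `G x_1`, with `e_{11} f = e_{11}`, `e_{a,j} f = e_{a,j}` and
`f e_{a,j} = e_{b,j}`. All three products are basic, so
`ē_{11} ē_{a,j} = ē_{11} f̄ ē_{a,j} = ē_{11} ē_{b,j}`.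
-/

section FreeIdempotentGenerated

variable {M : Type*} [Monoid M]

theorem ebar_mul_ebar {e f g : {e : M // e * e = e}}
    (hbasic : e.1 * f.1 = e.1 ∨ e.1 * f.1 = f.1 ∨ f.1 * e.1 = e.1 ∨ f.1 * e.1 = f.1)
    (hprod : e.1 * f.1 = g.1) : ebar e * ebar f = ebar g := by
  rw [ebar, ebar, ← map_mul]
  exact (Con.eq _).mpr (ConGen.Rel.of _ _ ⟨e, f, g, hbasic, hprod, rfl, rfl⟩)

theorem ebar_mul_ebar_eq_of_absorb {e u v : {e : M // e * e = e}} (f : {e : M // e * e = e})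
    (hef : e.1 * f.1 = e.1) (huf : u.1 * f.1 = u.1) (hfu : f.1 * u.1 = v.1) :
    ebar e * ebar u = ebar e * ebar v := by
  have hef' : ebar e * ebar f = ebar e := ebar_mul_ebar (Or.inl hef) hef
  have hfu' : ebar f * ebar u = ebar v := ebar_mul_ebar (Or.inr (Or.inr (Or.inr huf))) hfu
  rw [← hfu', ← mul_assoc, hef']

end FreeIdempotentGenerated

namespace ActEnd

variable {G : Type*} [Group G] {n : ℕ}

def transfer (a b : Fin n → G) (i j : Fin n) : ActEnd G n :=
  ⟨fun x => (x.1 * b x.2 * (a (if x.2 = j then j else i))⁻¹, if x.2 = j then j else i),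
   by intro h x; simp [mul_assoc]⟩

variable {a b : Fin n → G} {i j : Fin n}

theorem transfer_idem (hi : a i = b i) (hj : a j = b j) :
    transfer a b i j * transfer a b i j = transfer a b i j := by
  apply ext'
  funext ⟨g, t⟩
  by_cases ht : t = j <;> by_cases hij : i = j <;>
    simp [transfer, ht, hij, hi, hj, mul_assoc]

theorem eaj_one_mul_transfer (hi : a i = b i) (hj : a j = b j) :
    eaj (fun _ => (1 : G)) i * transfer a b i j = eaj (fun _ => (1 : G)) i := by
  apply ext'
  funext ⟨g, t⟩
  by_cases hij : i = j
  · subst hij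
    simp [transfer, eaj, hj]
  · simp [transfer, eaj, hij, hi]

theorem eaj_mul_transfer (hj : a j = b j) : eaj a j * transfer a b i j = eaj a j := by
  apply ext'
  funext ⟨g, t⟩
  simp [transfer, eaj, hj, mul_assoc]

theorem transfer_mul_eaj (hj : a j = b j) : transfer a b i j * eaj a j = eaj b j := by
  apply ext'
  funext ⟨g, t⟩
  by_cases ht : t = j <;> simp [transfer, eaj, ht, hj, mul_assoc]

end ActEnd

theorem igE_one_mul_igE_eq {G : Type*} [Group G] {n : ℕ} {a b : Fin n → G} {i j : Fin n}
    (hi : a i = b i) (hj : a j = b j) :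
    igE (fun _ => (1 : G)) i * igE a j = igE (fun _ => (1 : G)) i * igE b j :=
  ebar_mul_ebar_eq_of_absorb ⟨_, ActEnd.transfer_idem hi hj⟩
    (ActEnd.eaj_one_mul_transfer hi hj) (ActEnd.eaj_mul_transfer hj) (ActEnd.transfer_mul_eaj hj)

theorem stmt14 {G : Type*} [Group G] {n : ℕ} (hn : 3 ≤ n)
    (a b : Fin n → G) (ha : a ⟨0, by omega⟩ = 1) (hb : b ⟨0, by omega⟩ = 1)
    (j : Fin n) (hab : a j = b j) :
    ig11 (G := G) (n := n) (by omega) * igE a j * ig11 (G := G) (n := n) (by omega) =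
      ig11 (G := G) (n := n) (by omega) * igE b j * ig11 (G := G) (n := n) (by omega) := by
  rw [ig11, igE_one_mul_igE_eq (ha.trans hb.symm) hab]
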